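/- arXiv:2302.02348 — 2 statements merged into one kernel-verified Lean document; each statement's English description precedes it below -/
import Mathlib

section
/- Let X and Y be topological spaces, f : X → Y a continuous map, and λ an infinite cardinal. Suppose E ⊆ f[X] satisfies |E| = d(E) = λ, d(f⁻¹(y)) ≤ λ for every y ∈ E, and moreover f⁻¹[E] is dense in X. Then λ ∈ dd(X), i.e. there is a dense subset F of X with |F| = d(F) = λ. -/
open Cardinal Set Function

universe u

noncomputable section

/-- The density of a topological space: least cardinality of a dense subset. -/
def tdensity (X : Type u) [TopologicalSpace X] : Cardinal.{u} :=
  sInf {c : Cardinal.{u} | ∃ s : Set X, Dense s ∧ #s = c}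

/-- The weight of a topological space: least cardinality of a base. -/
def tweight (X : Type u) [TopologicalSpace X] : Cardinal.{u} :=
  sInf {c : Cardinal.{u} | ∃ B : Set (Set X), TopologicalSpace.IsTopologicalBasis B ∧ #B = c}

/-- The π-weight: least cardinality of a π-base. -/
def piWeight (X : Type u) [TopologicalSpace X] : Cardinal.{u} :=
  sInf {c : Cardinal.{u} | ∃ B : Set (Set X),
    (∀ U ∈ B, IsOpen U ∧ U.Nonempty) ∧
    (∀ V : Set X, IsOpen V → V.Nonempty → ∃ U ∈ B, U ⊆ V) ∧ #B = c}

/-- ĉ(X): the least cardinal κ such that X has no pairwise disjoint family of κ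
nonempty open sets. -/
def hatCell (X : Type u) [TopologicalSpace X] : Cardinal.{u} :=
  sInf {c : Cardinal.{u} | ¬ ∃ 𝒰 : Set (Set X),
    (∀ U ∈ 𝒰, IsOpen U ∧ U.Nonempty) ∧ 𝒰.PairwiseDisjoint id ∧ #𝒰 = c}

/-- `H` is a closed G_λ set: closed and the intersection of at most λ open sets. -/
def IsClosedGLambda (lam : Cardinal.{u}) {X : Type u} [TopologicalSpace X] (H : Set X) : Prop :=
  IsClosed H ∧ ∃ 𝒰 : Set (Set X), (∀ U ∈ 𝒰, IsOpen U) ∧ #𝒰 ≤ lam ∧ H = ⋂₀ 𝒰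

/-- X ∈ Γ(λ): every closed G_λ set has density ≤ λ. -/
def InGamma (lam : Cardinal.{u}) (X : Type u) [TopologicalSpace X] : Prop :=
  ∀ H : Set X, IsClosedGLambda lam H → tdensity ↥H ≤ lam

/-- `S` witnesses `X ∈ Δ(λ)`. -/
def DeltaWitness (lam : Cardinal.{u}) (X : Type u) [TopologicalSpace X] (S : Set X) : Prop :=
  Dense S ∧
  (∀ T : Set X, T ⊆ S → #T < lam → tweight ↥(closure T) < lam) ∧
  (∀ (Y : Type u) (_ : TopologicalSpace Y), T2Space Y → ∀ f : X → Y,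
     Continuous f → Surjective f → tweight Y = lam → #(f '' S) = lam)

/-- X ∈ Δ(λ). -/
def InDelta (lam : Cardinal.{u}) (X : Type u) [TopologicalSpace X] : Prop :=
  lam ≤ tweight X ∧ ∃ S : Set X, DeltaWitness lam X S

/-- A canonical discrete space of cardinality `c`. -/
instance (c : Cardinal.{u}) : TopologicalSpace c.out := ⊥

instance (c : Cardinal.{u}) : DiscreteTopology c.out := ⟨rfl⟩

/-- A(μ): one-point compactification of a discrete space of cardinality μ. -/
def ACompact (μ : Cardinal.{u}) : Type u := OnePoint μ.out

instance (μ : Cardinal.{u}) : TopologicalSpace (ACompact μ) :=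
  inferInstanceAs (TopologicalSpace (OnePoint μ.out))

/-- A(μ)^κ. -/
def APow (μ κ : Cardinal.{u}) : Type u := κ.out → ACompact μ

instance (μ κ : Cardinal.{u}) : TopologicalSpace (APow μ κ) :=
  inferInstanceAs (TopologicalSpace (κ.out → ACompact μ))

/-- The set of finite-support points of A(μ)^κ. -/
def finSupport (μ κ : Cardinal.{u}) : Set (APow μ κ) :=
  {x | {ξ | x ξ ≠ (OnePoint.infty : OnePoint μ.out)}.Finite}

/-- X is polyadic: a continuous image of some A(μ)^κ. -/
def IsPolyadic (X : Type u) [TopologicalSpace X] : Prop :=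
  ∃ μ κ : Cardinal.{u}, ℵ₀ ≤ μ ∧ ∃ f : APow μ κ → X, Continuous f ∧ Surjective f

lemma tdensity_nonempty_witness (Z : Type u) [TopologicalSpace Z] :
    ∃ s : Set Z, Dense s ∧ #s = tdensity Z := by
  have h : tdensity Z ∈ {c : Cardinal.{u} | ∃ s : Set Z, Dense s ∧ #s = c} :=
    csInf_mem ⟨#Z, Set.univ, dense_univ, Cardinal.mk_univ⟩
  exact h

lemma tdensity_le_mk (Z : Type u) [TopologicalSpace Z] : tdensity Z ≤ #Z :=
  csInf_le' ⟨Set.univ, dense_univ, Cardinal.mk_univ⟩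

lemma subset_closure_image_of_dense {X : Type u} [TopologicalSpace X] {H : Set X}
    {s : Set ↥H} (hs : Dense s) : H ⊆ closure (Subtype.val '' s) := by
  intro x hx
  have h1 : (⟨x, hx⟩ : ↥H) ∈ closure s := hs _
  have h2 := image_closure_subset_closure_image (f := (Subtype.val : ↥H → X)) (s := s)
    continuous_subtype_val
  exact h2 ⟨⟨x, hx⟩, h1, rfl⟩

/-- the remark after Lemma 2.1. -/
theorem statement1 {X Y : Type u} [TopologicalSpace X] [TopologicalSpace Y]
    (f : X → Y) (hf : Continuous f) (lam : Cardinal.{u}) (hlam : ℵ₀ ≤ lam)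
    (E : Set Y) (hE : E ⊆ range f) (hEcard : #E = lam) (hEdens : tdensity ↥E = lam)
    (hfib : ∀ y ∈ E, tdensity ↥(f ⁻¹' {y}) ≤ lam)
    (hdense : Dense (f ⁻¹' E)) :
    ∃ F : Set X, Dense F ∧ #F = lam ∧ tdensity ↥F = lam :=  by
  classical
  have key : ∀ y : ↥E, ∃ s : Set X, s ⊆ f ⁻¹' {(y : Y)} ∧
      (f ⁻¹' {(y : Y)}) ⊆ closure s ∧ #s ≤ lam := by
    rintro ⟨y, hy⟩
    obtain ⟨s, hs, hcard⟩ := tdensity_nonempty_witness ↥(f ⁻¹' {y})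
    refine ⟨Subtype.val '' s, ?_, subset_closure_image_of_dense hs, ?_⟩
    · rintro _ ⟨z, _, rfl⟩; exact z.2
    · rw [Cardinal.mk_image_eq Subtype.val_injective, hcard]
      exact hfib y hy
  choose D hD1 hD2 hD3 using key
  set F : Set X := ⋃ y : ↥E, D y with hF
  have hFsub : F ⊆ f ⁻¹' E := by
    rintro x hx
    obtain ⟨y, hy⟩ := Set.mem_iUnion.1 hx
    have := hD1 y hy
    simp only [Set.mem_preimage, Set.mem_singleton_iff] at this
    rw [Set.mem_preimage, this]; exact y.2
  have hFdense : Dense F := by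
    rw [dense_iff_closure_eq]
    have h1 : f ⁻¹' E ⊆ closure F := by
      intro x hx
      have : x ∈ f ⁻¹' {f x} := rfl
      have h2 := hD2 ⟨f x, hx⟩ this
      exact closure_mono (Set.subset_iUnion D ⟨f x, hx⟩) h2
    have := closure_mono h1
    rw [hdense.closure_eq, closure_closure] at this
    exact le_antisymm (Set.subset_univ _) this
  have hFcard : #F ≤ lam := by
    have h1 : #F ≤ #(↥E) * ⨆ y : ↥E, #(D y) := Cardinal.mk_iUnion_le D
    have h2 : (⨆ y : ↥E, #(D y)) ≤ lam := by
      rcases isEmpty_or_nonempty ↥E with h | h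
      · simp [ciSup_of_empty]
      · exact ciSup_le' hD3
    calc #F ≤ #(↥E) * ⨆ y : ↥E, #(D y) := h1
      _ ≤ lam * lam := by
          exact mul_le_mul' (le_of_eq hEcard) h2
      _ = lam := Cardinal.mul_eq_self hlam
  -- lower bound for tdensity F
  have hlow : lam ≤ tdensity ↥F := by
    obtain ⟨D', hD', hDcard⟩ := tdensity_nonempty_witness ↥F
    set Dx : Set X := Subtype.val '' D' with hDx
    have hDxF : Dx ⊆ F := by rintro _ ⟨z, _, rfl⟩; exact z.2
    have hDxdense : Dense Dx := by
      rw [dense_iff_closure_eq]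
      have h1 : F ⊆ closure Dx := subset_closure_image_of_dense hD'
      have := closure_mono h1
      rw [hFdense.closure_eq, closure_closure] at this
      exact le_antisymm (Set.subset_univ _) this
    have hfDxE : f '' Dx ⊆ E := by
      rintro _ ⟨x, hx, rfl⟩; exact hFsub (hDxF hx)
    have hEcl : E ⊆ closure (f '' Dx) := by
      intro y hy
      obtain ⟨x, rfl⟩ := hE hy
      have h1 : x ∈ closure Dx := by rw [hDxdense.closure_eq]; trivial
      exact image_closure_subset_closure_image hf ⟨x, h1, rfl⟩
    -- dense subset of E
    set t : Set ↥E := Subtype.val ⁻¹' (f '' Dx) with ht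
    have htdense : Dense t := by
      intro x
      rw [closure_subtype]
      have : Subtype.val '' t = f '' Dx := by
        rw [ht, Subtype.image_preimage_coe]
        exact Set.inter_eq_right.2 hfDxE
      rw [this]
      exact hEcl x.2
    have h1 : tdensity ↥E ≤ #t := csInf_le' ⟨t, htdense, rfl⟩
    have h2 : #t ≤ #(f '' Dx) := Cardinal.mk_preimage_of_injective _ _ Subtype.val_injective
    have h3 : #(f '' Dx) ≤ #Dx := Cardinal.mk_image_le
    have h4 : #Dx = #D' := Cardinal.mk_image_eq Subtype.val_injective
    calc lam = tdensity ↥E := hEdens.symm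
      _ ≤ #t := h1
      _ ≤ #Dx := h2.trans h3
      _ = tdensity ↥F := by rw [h4, hDcard]
  have hdF : tdensity ↥F = lam :=
    le_antisymm ((tdensity_le_mk ↥F).trans hFcard) hlow
  exact ⟨F, hFdense, le_antisymm hFcard (hdF ▸ hlow.trans (tdensity_le_mk ↥F)), hdF⟩
end
end

section
/- Let λ be an infinite cardinal and let X be a compact Hausdorff space with X ∈ Γ(λ) and X ∈ Δ(λ). Then λ ∈ dd(X), i.e. X has a dense subspace of density λ. -/
open Cardinal Set Function

universe u

noncomputable section

/-!
A compact Hausdorff space of weight `≥ λ` maps onto a Hausdorff space `Y` of weight exactly `λ`.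
To see this, choose by transfinite recursion, for `i < λ`, points `xᵢ ≠ yᵢ` that no earlier
`fⱼ` separates (possible while fewer than the weight of `X` functions are chosen) and a function
`fᵢ` separating them. The diagonal image of `X` in `ℝ^λ` has weight `≤ λ`. If its weight were
`< ν` for a regular `ν ≤ λ`, fewer than `ν` coordinates would separate its points, and a stage
beyond all of them gives a contradiction.

The fibres of this map are closed `G_λ` sets, so by `Γ(λ)` each has a dense subset of size
`≤ λ`, and the union `D` of these over the `λ` points of the image of `S` is dense of size `≤ λ`.
A dense subset of `D` of size `< λ` could be replaced by a subset of `S` with the same image, and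
the closure of that set, of weight `< λ`, would map onto `Y`, which has weight `λ`.
-/

open TopologicalSpace Topology

section WeightDensity

variable {X Y : Type u} [TopologicalSpace X] [TopologicalSpace Y]

theorem tweight_le_mk {B : Set (Set X)} (hB : IsTopologicalBasis B) : tweight X ≤ #B :=
  csInf_le' ⟨B, hB, rfl⟩

variable (X) in
theorem exists_isTopologicalBasis_mk_eq_tweight :
    ∃ B : Set (Set X), IsTopologicalBasis B ∧ #B = tweight X :=
  csInf_mem (s := {c | ∃ B : Set (Set X), IsTopologicalBasis B ∧ #B = c})
    ⟨_, _, isTopologicalBasis_opens, rfl⟩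

theorem tdensity_le_mk_s7 {s : Set X} (hs : Dense s) : tdensity X ≤ #s :=
  csInf_le' ⟨s, hs, rfl⟩

variable (X) in
theorem exists_dense_mk_eq_tdensity : ∃ s : Set X, Dense s ∧ #s = tdensity X :=
  csInf_mem (s := {c | ∃ s : Set X, Dense s ∧ #s = c}) ⟨_, _, dense_univ, rfl⟩

theorem le_tdensity {c : Cardinal.{u}} (h : ∀ s : Set X, Dense s → c ≤ #s) : c ≤ tdensity X :=
  le_csInf ⟨_, univ, dense_univ, rfl⟩ (by rintro _ ⟨s, hs, rfl⟩; exact h s hs)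

theorem Topology.IsInducing.tweight_le {f : X → Y} (hf : IsInducing f) :
    tweight X ≤ tweight Y := by
  obtain ⟨B, hB, hcard⟩ := exists_isTopologicalBasis_mk_eq_tweight Y
  calc tweight X ≤ #(preimage f '' B) := tweight_le_mk (hB.isInducing hf)
    _ ≤ #B := mk_image_le
    _ = tweight Y := hcard

theorem exists_subset_mk_le_subset_closure {H : Set X} {c : Cardinal.{u}}
    (hH : tdensity H ≤ c) : ∃ E ⊆ H, #E ≤ c ∧ H ⊆ closure E := by
  obtain ⟨s, hs, hcard⟩ := exists_dense_mk_eq_tdensity H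
  refine ⟨(↑) '' s, Subtype.coe_image_subset H s, ?_, fun x hx => ?_⟩
  · rw [mk_image_eq Subtype.val_injective, hcard]
    exact hH
  · exact image_closure_subset_closure_image continuous_subtype_val
      ⟨⟨x, hx⟩, hs.closure_eq.symm ▸ mem_univ _, rfl⟩

end WeightDensity

theorem Cardinal.mk_finset_lt {α : Type u} {c : Cardinal.{u}} (hc : ℵ₀ ≤ c) (h : #α < c) :
    #(Finset α) < c := by
  rcases finite_or_infinite α with hα | hα
  · exact (lt_aleph0_of_finite _).trans_le hc
  · rwa [mk_finset_of_infinite]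

theorem Cardinal.mk_iUnion_finite_lt {ι α : Type u} {s : ι → Set α} (hs : ∀ i, (s i).Finite)
    {c : Cardinal.{u}} (hc : ℵ₀ ≤ c) (h : #ι < c) : #(⋃ i, s i) < c := by
  rcases finite_or_infinite ι with hι | hι
  · exact (finite_iUnion hs).lt_aleph0.trans_le hc
  · calc #(⋃ i, s i) ≤ #ι * ⨆ i, #(s i) := mk_iUnion_le s
      _ ≤ #ι * ℵ₀ := by gcongr; exact ciSup_le' fun i => (hs i).lt_aleph0.le
      _ = #ι := mul_aleph0_eq (aleph0_le_mk ι)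
      _ < c := h

theorem Cardinal.exists_isRegular_lt_le {μ c : Cardinal} (hc : ℵ₀ ≤ c) (hμ : μ < c) :
    ∃ ν : Cardinal, ν.IsRegular ∧ μ < ν ∧ ν ≤ c := by
  rcases hc.eq_or_lt with rfl | hc
  · exact ⟨ℵ₀, isRegular_aleph0, hμ, le_rfl⟩
  · exact ⟨Order.succ (max μ ℵ₀), isRegular_succ (le_max_right _ _),
      (le_max_left _ _).trans_lt (Order.lt_succ _), Order.succ_le_of_lt (max_lt hμ hc)⟩

theorem Cardinal.IsRegular.exists_gt_of_mk_lt {ν : Cardinal.{u}} (hν : ν.IsRegular)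
    {A : Set ν.ord.ToType} (hA : #A < ν) : ∃ i, ∀ j ∈ A, j < i := by
  have hA' : ¬ IsCofinal A := fun hcof =>
    (Order.cof_le hcof).not_gt (by rwa [Ordinal.cof_toType, hν.cof_ord])
  simpa [IsCofinal] using hA'

theorem WellFoundedLT.exists_forall_fix {ι α : Type*} [LT ι] [WellFoundedLT ι]
    {P : ∀ i : ι, (∀ j, j < i → α) → α → Prop} (hP : ∀ i g, ∃ a, P i g a) :
    ∃ F : ι → α, ∀ i, P i (fun j _ => F j) (F i) := by
  refine ⟨wellFounded_lt.fix fun i g => (hP i g).choose, fun i => ?_⟩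
  rw [wellFounded_lt.fix_eq]
  exact (hP i _).choose_spec

theorem tweight_pi_real_le (ι : Type u) : tweight (ι → ℝ) ≤ max #ι ℵ₀ := by
  classical
  obtain ⟨b, hbc, -, hb⟩ := exists_countable_basis ℝ
  have : Countable b := hbc.to_subtype
  let box : (Σ F : Finset ι, F → b) → Set (ι → ℝ) := fun p =>
    (p.1 : Set ι).pi fun i => if h : i ∈ p.1 then (p.2 ⟨i, h⟩ : Set ℝ) else univ
  have hbox : { S | ∃ (U : ι → Set ℝ) (F : Finset ι), (∀ i ∈ F, U i ∈ b) ∧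
      S = (F : Set ι).pi U } ⊆ range box := by
    rintro _ ⟨U, F, hU, rfl⟩
    refine ⟨⟨F, fun i => ⟨U i, hU i i.2⟩⟩, pi_congr rfl fun i hi => ?_⟩
    simp [Finset.mem_coe.mp hi]
  calc tweight (ι → ℝ) ≤ #(range box) := (tweight_le_mk (isTopologicalBasis_pi fun _ => hb)).trans
        (mk_le_mk_of_subset hbox)
    _ ≤ #(Σ F : Finset ι, F → b) := mk_range_le
    _ ≤ #(Finset ι) * ℵ₀ := by
        rw [mk_sigma]
        exact (sum_le_sum _ _ fun F => mk_le_aleph0).trans_eq (by simp)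
    _ ≤ max #ι ℵ₀ := by
        refine (mul_le_max _ _).trans (max_le (max_le ?_ (le_max_right _ _)) (le_max_right _ _))
        rcases finite_or_infinite ι with hι | hι
        · exact (lt_aleph0_of_finite _).le.trans (le_max_right _ _)
        · exact (mk_finset_of_infinite ι).le.trans (le_max_left _ _)

section Image

variable {X Y : Type u} [TopologicalSpace X] [TopologicalSpace Y] [CompactSpace X] [T2Space Y]
  {f : X → Y}

/-- The sets of points whose whole fibre lies in a finite union of basic sets form a base. -/
theorem tweight_le_mk_finset_of_surjective (hf : Continuous f) (hs : Surjective f)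
    {B : Set (Set X)} (hB : IsTopologicalBasis B) : tweight Y ≤ #(Finset B) := by
  let F : Finset B → Set Y := fun t => {y | f ⁻¹' {y} ⊆ ⋃ U ∈ t, (U : Set X)}
  have hF : ∀ t, F t = (f '' (⋃ U ∈ t, (U : Set X))ᶜ)ᶜ := fun t => by
    ext y
    simp only [F, mem_ofPred_eq, subset_def, mem_preimage, mem_singleton_iff, mem_compl_iff,
      mem_image, not_exists, not_and]
    exact forall_congr' fun x => by tauto
  have hbasis : IsTopologicalBasis (range F) := by
    refine isTopologicalBasis_of_isOpen_of_nhds ?_ fun y W hyW hW => ?_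
    · rintro _ ⟨t, rfl⟩
      rw [hF, isOpen_compl_iff]
      exact hf.isClosedMap _ (isOpen_biUnion fun U _ => hB.isOpen U.2).isClosed_compl
    · have hcover : f ⁻¹' {y} ⊆ ⋃ U ∈ {U : B | (U : Set X) ⊆ f ⁻¹' W}, (U : Set X) :=
        fun x hx => by
          obtain ⟨U, hUB, hxU, hUW⟩ := hB.exists_subset_of_mem_open
            (show f x ∈ W from (mem_singleton_iff.mp hx).symm ▸ hyW) (hW.preimage hf)
          exact mem_biUnion (x := ⟨U, hUB⟩) hUW hxU
      obtain ⟨t, htW, htfin, ht⟩ := (isClosed_singleton.preimage hf).isCompact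
        |>.elim_finite_subcover_image (fun U _ => hB.isOpen U.2) hcover
      refine ⟨F htfin.toFinset, mem_range_self _, by simpa [F] using ht, fun z hz => ?_⟩
      obtain ⟨x, rfl⟩ := hs z
      obtain ⟨U, hUt, hxU⟩ := mem_iUnion₂.mp (hz rfl)
      exact htW (htfin.mem_toFinset.mp hUt) hxU
  exact (tweight_le_mk hbasis).trans mk_range_le

theorem tweight_lt_of_surjective (hf : Continuous f) (hs : Surjective f) {c : Cardinal.{u}}
    (hc : ℵ₀ ≤ c) (hX : tweight X < c) : tweight Y < c := by
  obtain ⟨B, hB, hcard⟩ := exists_isTopologicalBasis_mk_eq_tweight X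
  exact (tweight_le_mk_finset_of_surjective hf hs hB).trans_lt
    (mk_finset_lt hc (hcard ▸ hX))

end Image

section Separation

variable {Z ι : Type u} [TopologicalSpace Z] {E : ι → Type*} [∀ i, TopologicalSpace (E i)]
  [∀ i, T2Space (E i)] {h : ∀ i, Z → E i}

theorem IsCompact.exists_finset_separating (hc : ∀ i, Continuous (h i))
    (hsep : ∀ z w, (∀ i, h i z = h i w) → z = w) {K L : Set Z} (hK : IsCompact K)
    (hL : IsCompact L) (hKL : Disjoint K L) :
    ∃ s : Finset ι, ∀ z ∈ K, ∀ w ∈ L, ∃ i ∈ s, h i z ≠ h i w := by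
  have hcover : K ×ˢ L ⊆ ⋃ i, {p : Z × Z | h i p.1 ≠ h i p.2} := by
    rintro ⟨z, w⟩ ⟨hz, hw⟩
    by_contra hzw
    simp only [mem_iUnion, mem_ofPred_eq, not_exists, not_not] at hzw
    exact hKL.ne_of_mem hz hw (hsep z w hzw)
  obtain ⟨s, hs⟩ := (hK.prod hL).elim_finite_subcover _
    (fun i => isOpen_ne_fun ((hc i).comp continuous_fst) ((hc i).comp continuous_snd)) hcover
  exact ⟨s, fun z hz w hw => by simpa using hs (mk_mem_prod hz hw)⟩

/-- Separating the closures of pairs of basic sets takes finitely many coordinates per pair. -/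
theorem exists_separating_subfamily [CompactSpace Z] [T2Space Z] (hc : ∀ i, Continuous (h i))
    (hsep : ∀ z w, (∀ i, h i z = h i w) → z = w) {ν : Cardinal.{u}} (hν : ℵ₀ ≤ ν)
    (hZ : tweight Z < ν) : ∃ A : Set ι, #A < ν ∧ ∀ z w, (∀ i ∈ A, h i z = h i w) → z = w := by
  obtain ⟨B, hB, hcard⟩ := exists_isTopologicalBasis_mk_eq_tweight Z
  have hpair : ∀ p : B × B, ∃ s : Finset ι, Disjoint (closure (p.1 : Set Z)) (closure p.2) →
      ∀ z ∈ closure (p.1 : Set Z), ∀ w ∈ closure (p.2 : Set Z), ∃ i ∈ s, h i z ≠ h i w :=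
    fun p => by
      by_cases hd : Disjoint (closure (p.1 : Set Z)) (closure p.2)
      · obtain ⟨s, hs⟩ := isClosed_closure.isCompact.exists_finset_separating hc hsep
          isClosed_closure.isCompact hd
        exact ⟨s, fun _ => hs⟩
      · exact ⟨∅, fun h => absurd h hd⟩
  choose s hs using hpair
  refine ⟨⋃ p, (s p : Set ι), mk_iUnion_finite_lt (fun p => (s p).finite_toSet) hν ?_, ?_⟩
  · rw [mk_prod, lift_id, hcard]
    exact mul_lt_of_lt hν hZ hZ
  · intro z w hzw
    by_contra hne
    obtain ⟨U, V, hU, hV, hzU, hwV, hUV⟩ := t2_separation hne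
    obtain ⟨P, hP, hzP, hPU⟩ := hB.exists_closure_subset (hU.mem_nhds hzU)
    obtain ⟨Q, hQ, hwQ, hQV⟩ := hB.exists_closure_subset (hV.mem_nhds hwV)
    obtain ⟨i, hi, hne⟩ := hs (⟨P, hP⟩, ⟨Q, hQ⟩) (hUV.mono hPU hQV) z (subset_closure hzP) w
      (subset_closure hwQ)
    exact hne (hzw i (mem_iUnion.mpr ⟨_, hi⟩))

end Separation

def IsStaircase {ι Z : Type*} [LT ι] {E : ι → Type*} (h : ∀ i, Z → E i) (x y : ι → Z) : Prop :=
  ∀ i, h i (x i) ≠ h i (y i) ∧ ∀ j < i, h j (x i) = h j (y i)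

theorem IsStaircase.le_tweight {Z ι : Type u} [TopologicalSpace Z] [CompactSpace Z] [T2Space Z]
    [LT ι] {E : ι → Type*} [∀ i, TopologicalSpace (E i)] [∀ i, T2Space (E i)]
    {h : ∀ i, Z → E i} (hc : ∀ i, Continuous (h i)) (hsep : ∀ z w, (∀ i, h i z = h i w) → z = w)
    {x y : ι → Z} (hst : IsStaircase h x y) {ν : Cardinal.{u}} (hν : ℵ₀ ≤ ν)
    (hbdd : ∀ A : Set ι, #A < ν → ∃ i, ∀ j ∈ A, j < i) : ν ≤ tweight Z := by
  by_contra! hZ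
  obtain ⟨A, hA, hAsep⟩ := exists_separating_subfamily hc hsep hν hZ
  obtain ⟨i, hi⟩ := hbdd A hA
  exact (hst i).1 (congrArg (h i) (hAsep _ _ fun j hj => (hst i).2 j (hi j hj)))

section DiagonalImage

variable {X ι κ : Type u} [TopologicalSpace X] [CompactSpace X]

theorem IsStaircase.le_tweight_range [LT ι] {f : ι → C(X, ℝ)} {x y : ι → X}
    (hst : IsStaircase (fun i => ⇑(f i)) x y) {ν : Cardinal.{u}} (hν : ℵ₀ ≤ ν)
    (hbdd : ∀ A : Set ι, #A < ν → ∃ i, ∀ j ∈ A, j < i) :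
    ν ≤ tweight (range fun a i => f i a) := by
  have : CompactSpace (range fun a i => f i a) := isCompact_iff_compactSpace.mp
    (isCompact_range (continuous_pi fun i => (f i).continuous))
  refine IsStaircase.le_tweight (h := fun i z => z.1 i) (x := fun i => ⟨_, mem_range_self (x i)⟩)
    (y := fun i => ⟨_, mem_range_self (y i)⟩) (fun i => ?_) (fun z w hzw => ?_) hst hν hbdd
  · exact (continuous_apply i).comp continuous_subtype_val
  · exact Subtype.ext (funext hzw)

theorem tweight_range_comp_lt (f : ι → C(X, ℝ)) (e : κ → ι) {c : Cardinal.{u}} (hc : ℵ₀ ≤ c)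
    (h : tweight (range fun a i => f i a) < c) : tweight (range fun a k => f (e k) a) < c := by
  have : CompactSpace (range fun a i => f i a) := isCompact_iff_compactSpace.mp
    (isCompact_range (continuous_pi fun i => (f i).continuous))
  have hval : Continuous fun z : range (fun a i => f i a) => z.1 := continuous_subtype_val
  let restrict : range (fun a i => f i a) → range fun a k => f (e k) a := fun z =>
    ⟨fun k => z.1 (e k), by obtain ⟨a, ha⟩ := z.2; exact ⟨a, by rw [← ha]⟩⟩
  refine tweight_lt_of_surjective (f := restrict) ?_ ?_ hc h
  · exact (continuous_pi fun k => (continuous_apply (e k)).comp hval).subtype_mk _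
  · rintro ⟨_, a, rfl⟩
    exact ⟨⟨_, a, rfl⟩, rfl⟩

/-- If the weight were `< c`, it would be `< ν` for some regular `ν ≤ c`, and the first `ν`
steps of the staircase already force weight `≥ ν` on a quotient. -/
theorem IsStaircase.le_tweight_range_ord {c : Cardinal.{u}} (hc : ℵ₀ ≤ c)
    {f : c.ord.ToType → C(X, ℝ)} {x y : c.ord.ToType → X}
    (hst : IsStaircase (fun i => ⇑(f i)) x y) : c ≤ tweight (range fun a i => f i a) := by
  by_contra! hZ
  obtain ⟨ν, hν, hZν, hνc⟩ := exists_isRegular_lt_le hc hZ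
  have hνc' := ord_le_ord.mpr hνc
  rw [← Ordinal.type_toType ν.ord, ← Ordinal.type_toType c.ord] at hνc'
  obtain ⟨e⟩ := Ordinal.type_le_iff'.mp hνc'
  have hst' : IsStaircase (fun k => ⇑(f (e k))) (x ∘ e) (y ∘ e) := fun k =>
    ⟨(hst (e k)).1, fun j hj => (hst (e k)).2 _ (e.map_rel_iff.mpr hj)⟩
  exact (hst'.le_tweight_range hν.aleph0_le fun A hA => hν.exists_gt_of_mk_lt hA).not_gt
    (tweight_range_comp_lt f e hν.aleph0_le hZν)

end DiagonalImage

section Staircase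

variable {X : Type u} [TopologicalSpace X] [CompactSpace X]

theorem exists_ne_forall_eq_of_lt_tweight {J : Type u} (g : J → C(X, ℝ))
    (hJ : max #J ℵ₀ < tweight X) : ∃ x y, x ≠ y ∧ ∀ j, g j x = g j y := by
  by_contra! hsep
  have hinj : Injective fun a j => g j a := fun a b hab => by
    by_contra hne
    obtain ⟨j, hj⟩ := hsep a b hne
    exact hj (congrFun hab j)
  have hemb := (continuous_pi fun j => (g j).continuous).isClosedEmbedding hinj
  exact (hemb.isInducing.tweight_le.trans (tweight_pi_real_le J)).not_gt hJ

theorem exists_isStaircase [T2Space X] {ι : Type u} [LinearOrder ι] [WellFoundedLT ι]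
    (hι : ∀ i : ι, max #(Iio i) ℵ₀ < tweight X) :
    ∃ (f : ι → C(X, ℝ)) (x y : ι → X), IsStaircase (fun i => ⇑(f i)) x y := by
  obtain ⟨F, hF⟩ := WellFoundedLT.exists_forall_fix (α := C(X, ℝ) × X × X)
    (P := fun i g a =>
      a.1 a.2.1 ≠ a.1 a.2.2 ∧ ∀ j (hj : j < i), (g j hj).1 a.2.1 = (g j hj).1 a.2.2)
    fun i g => by
      obtain ⟨x, y, hxy, hg⟩ :=
        exists_ne_forall_eq_of_lt_tweight (fun j : Iio i => (g j.1 j.2).1) (hι i)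
      obtain ⟨φ, hφx, hφy, -⟩ := exists_continuous_zero_one_of_isClosed isClosed_singleton
        isClosed_singleton (disjoint_singleton.mpr hxy)
      exact ⟨(φ, x, y), by simp [hφx rfl, hφy rfl], fun j hj => hg ⟨j, hj⟩⟩
  exact ⟨fun i => (F i).1, fun i => (F i).2.1, fun i => (F i).2.2, hF⟩

theorem exists_continuous_surjective_tweight_eq [T2Space X] {c : Cardinal.{u}} (hc : ℵ₀ ≤ c)
    (hX : c ≤ tweight X) : ∃ (Y : Type u) (_ : TopologicalSpace Y), T2Space Y ∧
      ∃ g : X → Y, Continuous g ∧ Surjective g ∧ tweight Y = c := by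
  rcases hX.eq_or_lt with rfl | hX
  · exact ⟨X, _, inferInstance, id, continuous_id, surjective_id, rfl⟩
  obtain ⟨f, x, y, hst⟩ := exists_isStaircase (X := X) (ι := c.ord.ToType) fun i =>
    (max_le (by simpa using (mk_Iio_lt i (by simp)).le) hc).trans_lt hX
  have hπ : Continuous fun a i => f i a := continuous_pi fun i => (f i).continuous
  refine ⟨_, inferInstance, inferInstance, rangeFactorization _, hπ.subtype_mk _,
    rangeFactorization_surjective, le_antisymm ?_ (hst.le_tweight_range_ord hc)⟩
  calc tweight (range fun a i => f i a)
      ≤ max #c.ord.ToType ℵ₀ := IsInducing.subtypeVal.tweight_le.trans (tweight_pi_real_le _)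
    _ = c := by rw [mk_ord_toType, max_eq_left hc]

end Staircase

section GLambda

variable {X Y : Type u} [TopologicalSpace X] [TopologicalSpace Y] {c : Cardinal.{u}}

theorem isClosedGLambda_singleton [T1Space Y] (hY : tweight Y ≤ c) (y : Y) :
    IsClosedGLambda c {y} := by
  obtain ⟨B, hB, hcard⟩ := exists_isTopologicalBasis_mk_eq_tweight Y
  refine ⟨isClosed_singleton, {U ∈ B | y ∈ U}, fun U hU => hB.isOpen hU.1,
    (mk_le_mk_of_subset (sep_subset _ _)).trans (hcard.trans_le hY), ?_⟩
  refine (subset_sInter fun U hU => singleton_subset_iff.mpr hU.2).antisymm fun z hz => ?_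
  by_contra hzy
  obtain ⟨U, hUB, hyU, hUz⟩ := hB.exists_subset_of_mem_open (Ne.symm hzy) isOpen_ne
  exact hUz (hz U ⟨hUB, hyU⟩) rfl

theorem IsClosedGLambda.preimage {H : Set Y} (hH : IsClosedGLambda c H) {f : X → Y}
    (hf : Continuous f) : IsClosedGLambda c (f ⁻¹' H) := by
  obtain ⟨hclosed, 𝒰, hopen, hcard, rfl⟩ := hH
  refine ⟨hclosed.preimage hf, Set.preimage f '' 𝒰, ?_, mk_image_le.trans hcard,
    preimage_sInter.trans ?_⟩
  · rintro _ ⟨U, hU, rfl⟩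
    exact (hopen U hU).preimage hf
  · exact (sInter_image _ _).symm

end GLambda

theorem le_tdensity_of_image_subset {X Y : Type u} [TopologicalSpace X] [TopologicalSpace Y]
    [CompactSpace X] [T2Space Y] {c : Cardinal.{u}} (hc : ℵ₀ ≤ c) {g : X → Y}
    (hg : Continuous g) (hgs : Surjective g) (hY : c ≤ tweight Y) {S : Set X}
    (hS : ∀ T ⊆ S, #T < c → tweight (closure T) < c) {D : Set X} (hD : Dense D)
    (hDS : g '' D ⊆ g '' S) : c ≤ tdensity D := by
  refine le_tdensity fun s hs => ?_
  by_contra! hsc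
  have hs' : Dense (((↑) : D → X) '' s) := by
    have := hD.denseRange_val.comp hs.denseRange_val continuous_subtype_val
    rwa [DenseRange, range_comp, Subtype.range_coe] at this
  obtain ⟨T, hTS, hT⟩ := SurjOn.exists_bijOn_subset
    ((image_mono (Subtype.coe_image_subset D s)).trans hDS)
  have hTc : #T < c := by
    rw [← mk_image_eq_of_injOn _ _ hT.injOn, hT.image_eq]
    exact mk_image_le.trans_lt (mk_image_le.trans_lt hsc)
  have : CompactSpace (closure T) := isCompact_iff_compactSpace.mp isClosed_closure.isCompact
  have himage : g '' closure T = Set.univ := by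
    rw [image_closure_of_isCompact isClosed_closure.isCompact hg.continuousOn, hT.image_eq,
      (hgs.denseRange.dense_image hg hs').closure_eq]
  have hsurj : Surjective fun t : closure T => g t := fun y => by
    obtain ⟨t, ht, rfl⟩ := himage ▸ mem_univ y
    exact ⟨⟨t, ht⟩, rfl⟩
  exact (tweight_lt_of_surjective (hg.comp continuous_subtype_val) hsurj hc
    (hS T hTS hTc)).not_ge hY

/-- Theorem 3.2 (tm:GD). -/
theorem statement7 (lam : Cardinal.{u}) (hlam : ℵ₀ ≤ lam)
    {X : Type u} [TopologicalSpace X] [CompactSpace X] [T2Space X]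
    (hG : InGamma lam X) (hD : InDelta lam X) :
    ∃ D : Set X, Dense D ∧ tdensity ↥D = lam := by
  obtain ⟨hwX, S, hSdense, hSsmall, hSimage⟩ := hD
  obtain ⟨Y, _, _, g, hg, hgs, hwY⟩ := exists_continuous_surjective_tweight_eq hlam hwX
  choose E hEfib hEcard hEdense using fun y : Y => exists_subset_mk_le_subset_closure
    (hG _ ((isClosedGLambda_singleton hwY.le y).preimage hg))
  let D := ⋃ y : g '' S, E y
  have hSD : S ⊆ closure D := fun s hs =>
    closure_mono (subset_iUnion_of_subset ⟨g s, mem_image_of_mem g hs⟩ subset_rfl)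
      (hEdense (g s) rfl)
  have hDS : g '' D ⊆ g '' S := by
    rintro _ ⟨x, hx, rfl⟩
    obtain ⟨y, hxy⟩ := mem_iUnion.mp hx
    exact (hEfib y hxy : g x = y) ▸ y.2
  have hDcard : #D ≤ lam := calc
    #D ≤ #(g '' S) * ⨆ y : g '' S, #(E y) := mk_iUnion_le _
    _ ≤ lam * lam := mul_le_mul' (hSimage Y _ ‹_› g hg hgs hwY).le (ciSup_le' fun y => hEcard y)
    _ = lam := mul_eq_self hlam
  have hDdense : Dense D := dense_closure.mp (hSdense.mono hSD)
  refine ⟨D, hDdense, le_antisymm ?_ ?_⟩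
  · exact (tdensity_le_mk_s7 dense_univ).trans (by rwa [mk_univ])
  · exact le_tdensity_of_image_subset hlam hg hgs hwY.ge hSsmall hDdense hDS
end
end
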